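/- arXiv:1107.4537 — 2 statements merged into one kernel-verified Lean document; each statement's English description precedes it below -/
import Mathlib

section
/- Define a sequence recursively: Q_1 = 2/3, and for d ≥ 2, Q_d = l_d/(l_d+d) + (d/(l_d+d))·Q_{d-1}, where l_d ≥ d+1 is an arbitrary integer. Then Q_d ≥ 2d/(2d+1) for all d ≥ 1. -/
theorem stmt_8 (Q : ℕ → ℝ) (l : ℕ → ℕ) (hQ1 : Q 1 = 2 / 3)
    (hl : ∀ d : ℕ, 2 ≤ d → d + 1 ≤ l d)
    (hrec : ∀ d : ℕ, 2 ≤ d →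
      Q d = (l d : ℝ) / (l d + d) + ((d : ℝ) / (l d + d)) * Q (d - 1)) :
    ∀ d : ℕ, 1 ≤ d → (2 * d : ℝ) / (2 * d + 1) ≤ Q d := by
  intro d hd
  induction d, hd using Nat.le_induction with
  | base => rw [hQ1]; norm_num
  | succ d hd ih =>
    have h2 : 2 ≤ d + 1 := by omega
    rw [hrec (d + 1) h2]
    simp only [Nat.add_sub_cancel]
    set ld := (l (d + 1) : ℝ) with hldd
    have hld : (d : ℝ) + 2 ≤ ld := by
      have := hl (d + 1) h2
      push_cast [hldd]
      exact_mod_cast this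
    have hdpos : (0 : ℝ) ≤ d := Nat.cast_nonneg d
    have hA : (0 : ℝ) < ld + (d + 1) := by nlinarith
    have hB : (0 : ℝ) < 2 * d + 1 := by nlinarith
    have hC : (0 : ℝ) < 2 * ((d : ℝ) + 1) + 1 := by nlinarith
    push_cast
    calc (2 * ((d : ℝ) + 1)) / (2 * ((d : ℝ) + 1) + 1)
        ≤ ld / (ld + (d + 1)) + (((d : ℝ) + 1) / (ld + (d + 1))) * (2 * d / (2 * d + 1)) := by
          have heq : ld / (ld + (d + 1)) + (((d : ℝ) + 1) / (ld + (d + 1))) * (2 * d / (2 * d + 1))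
              = (ld * (2 * d + 1) + ((d : ℝ) + 1) * (2 * d)) / ((ld + (d + 1)) * (2 * d + 1)) := by
            field_simp
          rw [heq, div_le_div_iff₀ hC (mul_pos hA hB)]
          nlinarith [mul_pos hA hB, sq_nonneg ((d : ℝ))]
      _ ≤ ld / (ld + (d + 1)) + (((d : ℝ) + 1) / (ld + (d + 1))) * Q d := by
          gcongr
end

section
/- Let (a_l)_{l ≥ 1} be a sequence of nonnegative reals and b ≥ 0 such that a_1 ≤ (2/3)(a_2 + b) and a_l ≤ (1/2)(a_{l-1} + a_{l+1} + b) for all 2 ≤ l < L. Then for all 1 ≤ l < L: a_l ≤ ((l+1)/(l+2))·a_{l+1} + (l(l+3)/(2(l+2)))·b. -/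
theorem stmt_10 (a : ℕ → ℝ) (b : ℝ) (L : ℕ)
    (ha : ∀ l, 0 ≤ a l) (hb : 0 ≤ b)
    (h1 : a 1 ≤ (2 / 3) * (a 2 + b))
    (h2 : ∀ l, 2 ≤ l → l < L → a l ≤ (1 / 2) * (a (l - 1) + a (l + 1) + b)) :
    ∀ l, 1 ≤ l → l < L →
      a l ≤ ((l + 1 : ℝ) / (l + 2)) * a (l + 1) + ((l : ℝ) * (l + 3) / (2 * (l + 2))) * b := by
  intro l hl
  induction l, hl using Nat.le_induction with
  | base =>
    intro hL
    norm_num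
    linarith [h1]
  | succ l hl ih =>
    intro hL
    have ihl := ih (by omega)
    have h := h2 (l + 1) (by omega) hL
    have hs : l + 1 - 1 = l := by omega
    rw [hs] at h
    have hc : (0:ℝ) < (l:ℝ) + 2 := by positivity
    have hc3 : (0:ℝ) < (l:ℝ) + 3 := by positivity
    push_cast
    push_cast at ihl
    have h3 : ((l:ℝ) + 2) ≠ 0 := by positivity
    have h4 : ((l:ℝ) + 3) ≠ 0 := by positivity
    have ihl2 : ((l:ℝ) + 2) * a l ≤ ((l:ℝ) + 1) * a (l + 1) + (l:ℝ) * ((l:ℝ) + 3) / 2 * b := by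
      have h5 := mul_le_mul_of_nonneg_left ihl hc.le
      have e : ((l:ℝ) + 2) * (((l:ℝ) + 1) / ((l:ℝ) + 2) * a (l + 1) + (l:ℝ) * ((l:ℝ) + 3) / (2 * ((l:ℝ) + 2)) * b) = ((l:ℝ) + 1) * a (l + 1) + (l:ℝ) * ((l:ℝ) + 3) / 2 * b := by
        field_simp
      linarith [e ▸ h5]
    have key : 2 * ((l:ℝ) + 3) * a (l + 1) ≤ 2 * ((l:ℝ) + 2) * a (l + 1 + 1) + ((l:ℝ) + 1) * ((l:ℝ) + 4) * b := by
      nlinarith [ihl2, h, mul_le_mul_of_nonneg_left h hc.le]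
    have hpos : (0:ℝ) < 2 * ((l:ℝ) + 3) := by positivity
    rw [show ((l:ℝ) + 1 + 1) / ((l:ℝ) + 1 + 2) * a (l + 1 + 1) + ((l:ℝ) + 1) * ((l:ℝ) + 1 + 3) / (2 * ((l:ℝ) + 1 + 2)) * b = (2 * ((l:ℝ) + 2) * a (l + 1 + 1) + ((l:ℝ) + 1) * ((l:ℝ) + 4) * b) / (2 * ((l:ℝ) + 3)) from by field_simp; ring, le_div_iff₀ hpos]
    nlinarith [key]
end
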